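/- Let (Ā, B̄) be an interconnected structural system with subsystems (Ā_1, B̄_1), …, (Ā_r, B̄_r) and arbitrary interconnection patterns Ē_{i,j}. If every subsystem (Ā_i, B̄_i), i = 1,…,r, is structurally controllable, then the overall interconnected system (Ā, B̄) is structurally controllable. -/

import Mathlib

open Matrix

/-- Controllability matrix `[B, AB, …, A^{n-1}B]` (columns indexed by `Fin (card X) × U`). -/
def ctrbMatrix {X U : Type*} [Fintype X] [DecidableEq X]
    (A : Matrix X X ℝ) (B : Matrix X U ℝ) :
    Matrix X (Fin (Fintype.card X) × U) ℝ :=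
  fun i kj => (A ^ (kj.1 : ℕ) * B) i kj.2

/-- A real pair `(A,B)` is controllable if its controllability matrix has full rank. -/
def Controllable {X U : Type*} [Fintype X] [DecidableEq X] [Fintype U]
    (A : Matrix X X ℝ) (B : Matrix X U ℝ) : Prop :=
  (ctrbMatrix A B).rank = Fintype.card X

/-- `M` has the same sparsity pattern as the Boolean matrix `Mb`. -/
def SameSparsity {X Y : Type*} (M : Matrix X Y ℝ) (Mb : Matrix X Y Bool) : Prop :=
  ∀ i j, M i j = 0 ↔ Mb i j = false

/-- Structural controllability of a structural (Boolean) pair. -/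
def StructurallyControllable {X U : Type*} [Fintype X] [DecidableEq X] [Fintype U]
    (Ab : Matrix X X Bool) (Bb : Matrix X U Bool) : Prop :=
  ∃ A : Matrix X X ℝ, ∃ B : Matrix X U ℝ,
    SameSparsity A Ab ∧ SameSparsity B Bb ∧ Controllable A B

/-- Edge relation of the system digraph `D(Ā,B̄)`. -/
def sysDigraphRel {X U : Type*} (Ab : Matrix X X Bool) (Bb : Matrix X U Bool) :
    (X ⊕ U) → (X ⊕ U) → Prop :=
  fun v w => match v, w with
  | Sum.inl j, Sum.inl i => Ab i j = true
  | Sum.inr k, Sum.inl i => Bb i k = true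
  | _, Sum.inr _ => False

/-- A state vertex is input-reachable if some input vertex has a directed path to it. -/
def InputReachable {X U : Type*} (Ab : Matrix X X Bool) (Bb : Matrix X U Bool) (x : X) : Prop :=
  ∃ u : U, Relation.ReflTransGen (sysDigraphRel Ab Bb) (Sum.inr u) (Sum.inl x)

/-- Edge relation of the system bipartite graph `B(Ā,B̄)` (left = states ⊕ inputs, right = states). -/
def sysBipEdge {X U : Type*} (Ab : Matrix X X Bool) (Bb : Matrix X U Bool) :
    (X ⊕ U) → X → Prop :=
  fun v i => match v with
  | Sum.inl j => Ab i j = true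
  | Sum.inr k => Bb i k = true

/-- Edge relation of the state bipartite graph `B(Ā)`. -/
def stateBipEdge {X : Type*} (Ab : Matrix X X Bool) : X → X → Prop :=
  fun j i => Ab i j = true

/-- A matching of a bipartite graph with edge relation `E`: a set of edges sharing no
left vertex and no right vertex. -/
def IsMatching {α β : Type*} (E : α → β → Prop) (M : Set (α × β)) : Prop :=
  (∀ e ∈ M, E e.1 e.2) ∧
  (∀ e ∈ M, ∀ f ∈ M, e.1 = f.1 → e = f) ∧
  (∀ e ∈ M, ∀ f ∈ M, e.2 = f.2 → e = f)

/-- Right vertices belonging to no edge of `M`. -/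
def rightUnmatched {α β : Type*} (M : Set (α × β)) : Set β :=
  {b | ∀ e ∈ M, e.2 ≠ b}

/-- Left vertices belonging to no edge of `M`. -/
def leftUnmatched {α β : Type*} (M : Set (α × β)) : Set α :=
  {a | ∀ e ∈ M, e.1 ≠ a}

/-- A maximum matching: a matching of the largest cardinality. -/
def IsMaxMatching {α β : Type*} (E : α → β → Prop) (M : Set (α × β)) : Prop :=
  IsMatching E M ∧ ∀ M' : Set (α × β), IsMatching E M' → M'.ncard ≤ M.ncard

/-- `S` is a strongly connected component of the digraph with edge relation `R`. -/
def IsSCC {V : Type*} (R : V → V → Prop) (S : Set V) : Prop :=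
  S.Nonempty ∧ (∀ u ∈ S, ∀ v ∈ S, Relation.ReflTransGen R u v) ∧
  ∀ w : V, (∀ u ∈ S, Relation.ReflTransGen R u w ∧ Relation.ReflTransGen R w u) → w ∈ S

/-- An SCC is non-top linked if it has no incoming edge from outside. -/
def NonTopLinked {V : Type*} (R : V → V → Prop) (S : Set V) : Prop :=
  ∀ u v : V, R u v → v ∈ S → u ∈ S

/-- Dynamics pattern `(I_r ⊗ Ā') ∨ (Ē ⊗ H̄)` of a system of `r` similar subsystems. -/
def simA {n : ℕ} (r : ℕ) (A' H : Matrix (Fin n) (Fin n) Bool)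
    (E : Matrix (Fin r) (Fin r) Bool) :
    Matrix (Fin r × Fin n) (Fin r × Fin n) Bool :=
  fun q q' => ((if q.1 = q'.1 then A' q.2 q'.2 else false) || (E q.1 q'.1 && H q.2 q'.2))

/-- Input pattern `I_r ⊗ B̄'` of a system of `r` similar subsystems. -/
def simB {n p : ℕ} (r : ℕ) (B' : Matrix (Fin n) (Fin p) Bool) :
    Matrix (Fin r × Fin n) (Fin r × Fin p) Bool :=
  fun q k => if q.1 = k.1 then B' q.2 k.2 else false

/-- Entrywise OR of Boolean matrices. -/
def orMat {X Y : Type*} (M N : Matrix X Y Bool) : Matrix X Y Bool :=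
  fun i j => M i j || N i j

/-- Dynamics pattern of an interconnected system: diagonal blocks `Ā_i`,
off-diagonal blocks `Ē_{i,j}`. -/
def interA {r : ℕ} {n : Fin r → ℕ}
    (A : ∀ i, Matrix (Fin (n i)) (Fin (n i)) Bool)
    (E : ∀ i j, Matrix (Fin (n i)) (Fin (n j)) Bool) :
    Matrix (Σ i, Fin (n i)) (Σ i, Fin (n i)) Bool :=
  fun q q' => if h : q'.1 = q.1 then A q.1 q.2 (h ▸ q'.2) else E q.1 q'.1 q.2 q'.2

/-- Input pattern of an interconnected system: block diagonal with blocks `B̄_i`. -/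
def interB {r : ℕ} {n p : Fin r → ℕ}
    (B : ∀ i, Matrix (Fin (n i)) (Fin (p i)) Bool) :
    Matrix (Σ i, Fin (n i)) (Σ i, Fin (p i)) Bool :=
  fun q k => if h : k.1 = q.1 then B q.1 q.2 (h ▸ k.2) else false

open Filter Topology

/-! Realize every subsystem by a controllable real pair `(Aᵢ, Bᵢ)`. The block-diagonal pair
`(diag Aᵢ, diag Bᵢ)` is controllable, because a left null vector of its controllability matrix
splits into left null vectors of the subsystems' controllability matrices. Controllability is
an open condition on `A` (nonvanishing of `det (C Cᵀ)` for the controllability matrix `C`), so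
adding `ε` times a 0/1 realization of the interconnection pattern keeps the pair controllable
for some small `ε ≠ 0`, and that pair has exactly the sparsity pattern of `(Ā, B̄)`. -/

theorem Matrix.rank_eq_card_iff_linearIndependent_row {m n K : Type*} [Field K] [Fintype m]
    [Fintype n] (M : Matrix m n K) : M.rank = Fintype.card m ↔ LinearIndependent K M.row := by
  rw [rank_eq_finrank_span_row, linearIndependent_iff_card_eq_finrank_span, Set.finrank, eq_comm]

section Controllability

variable {X U : Type*} [Fintype X] [DecidableEq X] [Fintype U]

theorem controllable_iff_det_ne_zero (A : Matrix X X ℝ) (B : Matrix X U ℝ) :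
    Controllable A B ↔ (ctrbMatrix A B * (ctrbMatrix A B)ᵀ).det ≠ 0 := by
  rw [Controllable, ← rank_self_mul_transpose, rank_eq_card_iff_linearIndependent_row,
    linearIndependent_rows_iff_isUnit, isUnit_iff_isUnit_det, isUnit_iff_ne_zero]

theorem controllable_iff_vecMul (A : Matrix X X ℝ) (B : Matrix X U ℝ) :
    Controllable A B ↔
      ∀ v : X → ℝ, (∀ k < Fintype.card X, v ᵥ* (A ^ k * B) = 0) → v = 0 := by
  rw [Controllable, rank_eq_card_iff_linearIndependent_row, ← vecMul_injective_iff,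
    ← coe_vecMulLinear, injective_iff_map_eq_zero]
  refine forall_congr' fun v => imp_congr_left ⟨fun h k hk => ?_, fun h => ?_⟩
  · exact funext fun u => congrFun h (⟨k, hk⟩, u)
  · exact funext fun ku => congrFun (h ku.1 ku.1.2) ku.2

theorem isOpen_setOf_controllable (B : Matrix X U ℝ) :
    IsOpen {A : Matrix X X ℝ | Controllable A B} := by
  simp_rw [controllable_iff_det_ne_zero]
  have hC : Continuous fun A : Matrix X X ℝ => ctrbMatrix A B :=
    continuous_matrix fun i kj =>
      ((continuous_pow (kj.1 : ℕ)).matrix_mul continuous_const).matrix_elem i kj.2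
  exact isOpen_ne_fun (hC.matrix_mul hC.matrix_transpose).matrix_det continuous_const

theorem Controllable.exists_ne_zero_add_smul {A : Matrix X X ℝ} {B : Matrix X U ℝ}
    (h : Controllable A B) (N : Matrix X X ℝ) :
    ∃ ε : ℝ, ε ≠ 0 ∧ Controllable (A + ε • N) B := by
  have hcont : Continuous fun ε : ℝ => A + ε • N := by fun_prop
  have hnhds : ∀ᶠ ε in 𝓝 (0 : ℝ), Controllable (A + ε • N) B :=
    hcont.continuousAt.preimage_mem_nhds
      ((isOpen_setOf_controllable B).mem_nhds (by simpa using h))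
  have hpunctured : ∀ᶠ ε in 𝓝[≠] (0 : ℝ), ε ≠ 0 ∧ Controllable (A + ε • N) B :=
    eventually_mem_nhdsWithin.and (hnhds.filter_mono nhdsWithin_le_nhds)
  exact hpunctured.exists

end Controllability

theorem Matrix.vecMul_blockDiagonal'_apply {ι R : Type*} [Fintype ι] [DecidableEq ι]
    [NonUnitalNonAssocSemiring R] {X U : ι → Type*} [∀ i, Fintype (X i)]
    (M : ∀ i, Matrix (X i) (U i) R) (v : (Σ i, X i) → R) (i : ι) (u : U i) :
    (v ᵥ* blockDiagonal' M) ⟨i, u⟩ = ((fun a => v ⟨i, a⟩) ᵥ* M i) u := by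
  simp only [vecMul, dotProduct, Fintype.sum_sigma]
  rw [Finset.sum_eq_single i]
  · simp [blockDiagonal'_apply_eq]
  · intro j _ hji
    simp [blockDiagonal'_apply_ne _ _ _ hji]
  · simp

theorem controllable_blockDiagonal' {ι : Type*} [Fintype ι] [DecidableEq ι]
    {X U : ι → Type*} [∀ i, Fintype (X i)] [∀ i, DecidableEq (X i)] [∀ i, Fintype (U i)]
    {A : ∀ i, Matrix (X i) (X i) ℝ} {B : ∀ i, Matrix (X i) (U i) ℝ}
    (h : ∀ i, Controllable (A i) (B i)) :
    Controllable (blockDiagonal' A) (blockDiagonal' B) := by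
  rw [controllable_iff_vecMul]
  intro v hv
  funext ⟨i, a⟩
  have hblock : (fun a => v ⟨i, a⟩) = 0 := by
    refine (controllable_iff_vecMul _ _).mp (h i) _ fun k hk => funext fun u => ?_
    have hk' : k < Fintype.card (Σ i, X i) :=
      hk.trans_le (Fintype.card_le_of_injective _ sigma_mk_injective)
    have hvk := hv k hk'
    rw [← blockDiagonal'_pow, ← blockDiagonal'_mul] at hvk
    exact (vecMul_blockDiagonal'_apply _ v i u).symm.trans (congrFun hvk ⟨i, u⟩)
  exact congrFun hblock a

section Interconnection

variable {r : ℕ} {n p : Fin r → ℕ}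

def interconnectionMatrix (E : ∀ i j, Matrix (Fin (n i)) (Fin (n j)) Bool) :
    Matrix (Σ i, Fin (n i)) (Σ i, Fin (n i)) ℝ :=
  fun q q' => if q'.1 = q.1 then 0 else if E q.1 q'.1 q.2 q'.2 then 1 else 0

theorem sameSparsity_interA {A : ∀ i, Matrix (Fin (n i)) (Fin (n i)) Bool}
    {Ar : ∀ i, Matrix (Fin (n i)) (Fin (n i)) ℝ} (hA : ∀ i, SameSparsity (Ar i) (A i))
    (E : ∀ i j, Matrix (Fin (n i)) (Fin (n j)) Bool) {ε : ℝ} (hε : ε ≠ 0) :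
    SameSparsity (blockDiagonal' Ar + ε • interconnectionMatrix E) (interA A E) := by
  rintro ⟨i, a⟩ ⟨j, b⟩
  by_cases hji : j = i
  · subst hji
    simpa [interA, interconnectionMatrix, blockDiagonal'_apply_eq] using hA j a b
  · cases hE : E i j a b <;>
      simp [interA, interconnectionMatrix, blockDiagonal'_apply_ne _ _ _ (Ne.symm hji), hji, hE,
        hε]

theorem sameSparsity_interB {B : ∀ i, Matrix (Fin (n i)) (Fin (p i)) Bool}
    {Br : ∀ i, Matrix (Fin (n i)) (Fin (p i)) ℝ} (hB : ∀ i, SameSparsity (Br i) (B i)) :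
    SameSparsity (blockDiagonal' Br) (interB B) := by
  rintro ⟨i, a⟩ ⟨j, u⟩
  by_cases hji : j = i
  · subst hji
    simpa [interB, blockDiagonal'_apply_eq] using hB j a u
  · simp [interB, blockDiagonal'_apply_ne _ _ _ (Ne.symm hji), hji]

end Interconnection

/-- if every subsystem of an interconnected structural system is
structurally controllable, then the overall interconnected system is structurally
controllable (for arbitrary interconnection patterns). -/
theorem interconnected_struct_controllable_of_subsystems
    {r : ℕ} {n p : Fin r → ℕ}
    (A : ∀ i, Matrix (Fin (n i)) (Fin (n i)) Bool)
    (B : ∀ i, Matrix (Fin (n i)) (Fin (p i)) Bool)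
    (E : ∀ i j, Matrix (Fin (n i)) (Fin (n j)) Bool)
    (hsub : ∀ i, StructurallyControllable (A i) (B i)) :
    StructurallyControllable (interA A E) (interB B) := by
  choose Ar Br hAr hBr hctrb using hsub
  obtain ⟨ε, hε, hperturbed⟩ :=
    (controllable_blockDiagonal' hctrb).exists_ne_zero_add_smul (interconnectionMatrix E)
  exact ⟨_, _, sameSparsity_interA hAr E hε, sameSparsity_interB hBr, hperturbed⟩
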